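/- For every ε ∈ (0, 1/3), the minimum average length of a binary alphabetic code for three ordered symbols with probability distribution (ε, 1−2ε, ε) equals 2 − ε. -/

import Mathlib

/-- No codeword is a prefix of another. -/
def PrefixFree {n : ℕ} (w : Fin n → List Bool) : Prop :=
  ∀ i j : Fin n, i ≠ j → ¬ (w i <+: w j)

/-- The codewords are strictly increasing in the lexicographic order on binary strings. -/
def LexIncreasing {n : ℕ} (w : Fin n → List Bool) : Prop :=
  ∀ i j : Fin n, i < j → List.Lex (· < ·) (w i) (w j)

/-- A binary alphabetic code: prefix-free and lexicographically increasing codewords. -/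
def IsAlphabeticCode {n : ℕ} (w : Fin n → List Bool) : Prop :=
  PrefixFree w ∧ LexIncreasing w


/-!
Every codeword is nonempty, since the empty word is a prefix of every other one. A codeword of
length one is `[false]` or `[true]`; the only word lexicographically below `[false]` is empty and
every word above `[true]` extends it, so a one-bit codeword can only stand first or last. Hence
the middle codeword has length at least two, and the outer ones cannot both have length one:
they would be `[false]` and `[true]`, and the middle codeword would extend one of them. With
weights `ε ≥ 0` and `1 - 2ε ≥ 0` this gives an average length of at least `3ε + 2(1 - 2ε) = 2 - ε`,
attained by the code `00, 01, 1`.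
-/

namespace List

theorem eq_nil_of_lex_singleton_false {l : List Bool} (h : Lex (· < ·) l [false]) : l = [] := by
  cases h with
  | nil => rfl
  | cons h' => cases h'
  | rel h' => simp [Bool.lt_iff] at h'

theorem singleton_true_prefix_of_lex {l : List Bool} (h : Lex (· < ·) [true] l) :
    [true] <+: l := by
  cases h with
  | cons => exact ⟨_, rfl⟩
  | rel h' => simp [Bool.lt_iff] at h'

theorem exists_singleton_prefix {α : Type*} {l : List α} (hl : l ≠ []) : ∃ a, [a] <+: l := by
  obtain ⟨a, t, rfl⟩ := exists_cons_of_ne_nil hl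
  exact ⟨a, t, rfl⟩

end List

theorem PrefixFree.ne_nil {n : ℕ} {w : Fin n → List Bool} (hw : PrefixFree w) {i j : Fin n}
    (hij : i ≠ j) : w i ≠ [] :=
  fun h => hw i j hij (h ▸ List.nil_prefix)

theorem PrefixFree.one_le_length {n : ℕ} {w : Fin n → List Bool} (hw : PrefixFree w)
    {i j : Fin n} (hij : i ≠ j) : 1 ≤ (w i).length :=
  List.length_pos_iff.mpr (hw.ne_nil hij)

namespace IsAlphabeticCode

variable {n : ℕ} {w : Fin n → List Bool}

theorem ne_singleton_false (hw : IsAlphabeticCode w) {i j : Fin n} (hji : j < i) :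
    w i ≠ [false] := fun h =>
  hw.1.ne_nil hji.ne (List.eq_nil_of_lex_singleton_false (h ▸ hw.2 j i hji))

theorem ne_singleton_true (hw : IsAlphabeticCode w) {i j : Fin n} (hij : i < j) :
    w i ≠ [true] := fun h =>
  hw.1 i j hij.ne (h ▸ List.singleton_true_prefix_of_lex (h ▸ hw.2 i j hij))

theorem two_le_length_of_lt_of_lt (hw : IsAlphabeticCode w) {i j k : Fin n} (hij : i < j)
    (hjk : j < k) : 2 ≤ (w j).length := by
  by_contra! h
  have hpos := hw.1.one_le_length hjk.ne
  obtain ⟨b, hb⟩ := List.length_eq_one_iff.mp (show (w j).length = 1 by omega)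
  cases b
  · exact hw.ne_singleton_false hij hb
  · exact hw.ne_singleton_true hjk hb

theorem three_le_length_add_length_of_lt_of_lt (hw : IsAlphabeticCode w) {i j k : Fin n}
    (hij : i < j) (hjk : j < k) : 3 ≤ (w i).length + (w k).length := by
  by_contra! h
  have hi := hw.1.one_le_length (hij.trans hjk).ne
  have hk := hw.1.one_le_length (hij.trans hjk).ne'
  obtain ⟨a, ha⟩ := List.length_eq_one_iff.mp (show (w i).length = 1 by omega)
  obtain ⟨c, hc⟩ := List.length_eq_one_iff.mp (show (w k).length = 1 by omega)
  have hi_false : w i = [false] := by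
    cases a
    · exact ha
    · exact absurd ha (hw.ne_singleton_true hij)
  have hk_true : w k = [true] := by
    cases c
    · exact absurd hc (hw.ne_singleton_false (hij.trans hjk))
    · exact hc
  obtain ⟨b, hb⟩ := List.exists_singleton_prefix (hw.1.ne_nil hjk.ne)
  cases b
  · exact hw.1 i j hij.ne (hi_false ▸ hb)
  · exact hw.1 k j hjk.ne' (hk_true ▸ hb)

end IsAlphabeticCode

theorem three_symbols_min (ε : ℝ) (hε : 0 < ε) (hε' : ε < 1 / 3) :
    IsLeast {x : ℝ | ∃ w : Fin 3 → List Bool, IsAlphabeticCode w ∧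
      x = ε * ((w 0).length : ℝ) + (1 - 2 * ε) * ((w 1).length : ℝ)
          + ε * ((w 2).length : ℝ)} (2 - ε) := by
  constructor
  · refine ⟨![[false, false], [false, true], [true]], ⟨?_, ?_⟩, ?_⟩
    · unfold PrefixFree; decide
    · unfold LexIncreasing; decide
    · simp only [Matrix.cons_val, List.length_cons, List.length_nil]
      push_cast
      ring
  · rintro x ⟨w, hw, rfl⟩
    have hmid : (2 : ℝ) ≤ (w 1).length := by
      exact_mod_cast hw.two_le_length_of_lt_of_lt (i := 0) (k := 2) (by decide) (by decide)
    have hout : (3 : ℝ) ≤ (w 0).length + (w 2).length := by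
      exact_mod_cast hw.three_le_length_add_length_of_lt_of_lt (j := 1) (by decide) (by decide)
    nlinarith
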